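/- arXiv:math/0406345 — 2 statements merged into one kernel-verified Lean document; each statement's English description precedes it below -/
import Mathlib

section
/- Let 0 < θ ≤ 1. Then for every real x with 0 ≤ x < 1, ₂F₁(1−θ,−θ;1;x) ≥ Γ(2θ+1)/(2·Γ(θ+1)²), and moreover the series ₂F₁(1−θ,−θ;1;x) converges at x=1 with value ₂F₁(1−θ,−θ;1;1) = Γ(2θ+1)/(2·Γ(θ+1)²). -/
open Real

noncomputable section

open Set MeasureTheory intervalIntegral Filter



lemma gamma_prod (a : ℝ) (ha : 0 < a) (n : ℕ) :
    Real.Gamma (a + n) = (∏ i ∈ Finset.range n, (a + i)) * Real.Gamma a := by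
  induction n with
  | zero => simp
  | succ n ih =>
    have h1 : a + (n+1:ℕ) = (a + n) + 1 := by push_cast; ring
    rw [h1, Real.Gamma_add_one (by positivity), ih, Finset.prod_range_succ]
    push_cast; ring

lemma gamma_interp {x y t : ℝ} (hx : 0 < x) (hy : 0 < y) (ht0 : 0 ≤ t) (ht1 : t ≤ 1) :
    Real.Gamma (t * x + (1 - t) * y) ≤ Real.Gamma x ^ t * Real.Gamma y ^ (1 - t) := by
  have h := Real.convexOn_log_Gamma.2 (mem_Ioi.2 hx) (mem_Ioi.2 hy) ht0 (by linarith)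
      (by ring : t + (1 - t) = 1)
  simp only [Function.comp, smul_eq_mul] at h
  have hpos : 0 < Real.Gamma (t * x + (1 - t) * y) :=
    Real.Gamma_pos_of_pos (by nlinarith [mul_nonneg ht0 hx.le, mul_nonneg (by linarith : (0:ℝ) ≤ 1 - t) hy.le])
  calc Real.Gamma (t * x + (1 - t) * y) = Real.exp (Real.log (Real.Gamma (t * x + (1 - t) * y))) :=
        (Real.exp_log hpos).symm
    _ ≤ Real.exp (t * Real.log (Real.Gamma x) + (1 - t) * Real.log (Real.Gamma y)) :=
        Real.exp_le_exp.2 h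
    _ = Real.Gamma x ^ t * Real.Gamma y ^ (1 - t) := by
        rw [Real.exp_add, ← Real.log_rpow (Real.Gamma_pos_of_pos hx),
          ← Real.log_rpow (Real.Gamma_pos_of_pos hy), Real.exp_log (Real.rpow_pos_of_pos (Real.Gamma_pos_of_pos hx) _),
          Real.exp_log (Real.rpow_pos_of_pos (Real.Gamma_pos_of_pos hy) _)]


lemma beta_complex_eq {u v : ℝ} :
    Complex.betaIntegral u v = ((∫ x in (0:ℝ)..1, x ^ (u-1) * (1-x) ^ (v-1) : ℝ) : ℂ) := by
  rw [Complex.betaIntegral, ← intervalIntegral.integral_ofReal]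
  refine intervalIntegral.integral_congr fun x hx => ?_
  rw [uIcc_of_le zero_le_one] at hx
  push_cast
  rw [Complex.ofReal_cpow hx.1, Complex.ofReal_cpow (by linarith [hx.2] : (0:ℝ) ≤ 1 - x)]
  push_cast
  ring

lemma beta_real {u v : ℝ} (hu : 0 < u) (hv : 0 < v) :
    ∫ x in (0:ℝ)..1, x ^ (u-1) * (1-x) ^ (v-1) = Real.Gamma u * Real.Gamma v / Real.Gamma (u+v) := by
  have h := Complex.Gamma_mul_Gamma_eq_betaIntegral
    (by simpa using hu : 0 < (u:ℂ).re) (by simpa using hv : 0 < (v:ℂ).re)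
  rw [beta_complex_eq, ← Complex.ofReal_add, Complex.Gamma_ofReal, Complex.Gamma_ofReal,
    Complex.Gamma_ofReal, ← Complex.ofReal_mul, ← Complex.ofReal_mul] at h
  have h3 := Complex.ofReal_injective h
  have hne : Real.Gamma (u+v) ≠ 0 := (Real.Gamma_pos_of_pos (by linarith)).ne'
  field_simp
  linarith [h3]

lemma beta_integrable {u v : ℝ} (hu : 0 < u) (hv : 0 < v) :
    IntervalIntegrable (fun x : ℝ => x ^ (u-1) * (1-x) ^ (v-1)) volume 0 1 := by
  have h := Complex.betaIntegral_convergent (by simpa using hu : 0 < (u:ℂ).re)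
    (by simpa using hv : 0 < (v:ℂ).re)
  rw [intervalIntegrable_iff_integrableOn_Ioc_of_le zero_le_one] at h ⊢
  have h2 : IntegrableOn (Complex.re ∘ fun x : ℝ => (x:ℂ) ^ ((u:ℂ)-1) * (1-(x:ℂ)) ^ ((v:ℂ)-1))
      (Ioc (0:ℝ) 1) volume := h.re
  refine h2.congr_fun (fun x hx => ?_) measurableSet_Ioc
  simp only [Function.comp]
  have : ((x:ℂ) ^ ((u:ℂ)-1) * (1-(x:ℂ)) ^ ((v:ℂ)-1))
      = ((x ^ (u-1) * (1-x) ^ (v-1) : ℝ) : ℂ) := by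
    push_cast
    rw [Complex.ofReal_cpow hx.1.le, Complex.ofReal_cpow (by linarith [hx.2] : (0:ℝ) ≤ 1 - x)]
    push_cast; ring
  rw [this, Complex.ofReal_re]


lemma binom_remainder (θ s : ℝ) (hs0 : 0 ≤ s) (hs1 : s < 1) (N : ℕ) :
    (1-s) ^ θ = (∑ n ∈ Finset.range (N+1),
        (∏ i ∈ Finset.range n, (-θ+(i:ℝ))) / n.factorial * s ^ n)
      + (∏ i ∈ Finset.range (N+1), (-θ+(i:ℝ))) / N.factorial
        * ∫ u in (0:ℝ)..s, (s-u)^N * (1-u) ^ (θ - ((N:ℝ)+1)) := by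
  have hbase : ∀ u ∈ uIcc (0:ℝ) s, 0 < 1 - u := by
    intro u hu
    rw [uIcc_of_le hs0] at hu
    linarith [hu.2]
  induction N with
  | zero =>
    have hderiv : ∀ u ∈ uIcc (0:ℝ) s,
        HasDerivAt (fun u : ℝ => (1-u) ^ θ) (-θ * (1-u) ^ (θ-1)) u := by
      intro u hu
      have h1 : HasDerivAt (fun u : ℝ => 1-u) (-1) u := by
        simpa using (hasDerivAt_id u).const_sub 1
      have := h1.rpow_const (p := θ) (Or.inl (hbase u hu).ne')
      convert this using 1; ring
    have hint : IntervalIntegrable (fun u : ℝ => -θ * (1-u) ^ (θ-1)) volume 0 s := by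
      apply ContinuousOn.intervalIntegrable
      apply ContinuousOn.mul continuousOn_const
      exact (continuousOn_const.sub continuousOn_id).rpow_const
        (fun u hu => Or.inl (hbase u hu).ne')
    have hftc := intervalIntegral.integral_eq_sub_of_hasDerivAt
      (fun u hu => hderiv u hu) hint
    simp only [sub_zero, Real.one_rpow] at hftc
    have heq : ∫ u in (0:ℝ)..s, (s-u)^(0:ℕ) * (1-u) ^ (θ - ((0:ℕ):ℝ)-1+1-1)
        = ∫ u in (0:ℝ)..s, (1-u) ^ (θ-1) := by
      refine intervalIntegral.integral_congr fun u hu => ?_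
      norm_num
    have h2 : ∫ u in (0:ℝ)..s, -θ * (1-u) ^ (θ-1) = -θ * ∫ u in (0:ℝ)..s, (1-u) ^ (θ-1) :=
      intervalIntegral.integral_const_mul _ _
    rw [h2] at hftc
    have heq2 : ∫ u in (0:ℝ)..s, (s-u)^(0:ℕ) * (1-u) ^ (θ - (((0:ℕ):ℝ)+1))
        = ∫ u in (0:ℝ)..s, (1-u) ^ (θ-1) := by
      refine intervalIntegral.integral_congr fun u hu => ?_
      norm_num
    rw [heq2]
    simp only [zero_add, Finset.sum_range_one, Finset.prod_range_zero, Finset.prod_range_one,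
      Nat.factorial_zero, Nat.cast_one, Nat.cast_zero, add_zero, pow_zero, div_one, one_mul,
      mul_one]
    linear_combination -hftc
  | succ N ih =>
    rw [ih, Finset.sum_range_succ (n := N+1)]
    have hA : ∫ u in (0:ℝ)..s, (s-u)^N * (1-u) ^ (θ - ((N:ℝ)+1))
        = s^(N+1)/((N:ℝ)+1)
          - ((θ-((N:ℝ)+1))/((N:ℝ)+1))
            * ∫ u in (0:ℝ)..s, (s-u)^(N+1) * (1-u) ^ (θ - (((N:ℝ)+1)+1)) := by
      have hw : ∀ u ∈ uIcc (0:ℝ) s,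
          HasDerivAt (fun u : ℝ => (1-u) ^ (θ-((N:ℝ)+1)))
            (-(θ-((N:ℝ)+1)) * (1-u) ^ (θ-((N:ℝ)+1)-1)) u := by
        intro u hu
        have h1 : HasDerivAt (fun u : ℝ => 1-u) (-1) u := by
          simpa using (hasDerivAt_id u).const_sub 1
        have := h1.rpow_const (p := θ-((N:ℝ)+1)) (Or.inl (hbase u hu).ne')
        convert this using 1
        ring
      have hv : ∀ u ∈ uIcc (0:ℝ) s,
          HasDerivAt (fun u : ℝ => -(s-u)^(N+1) / ((N:ℝ)+1)) ((s-u)^N) u := by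
        intro u _
        have h1 : HasDerivAt (fun u : ℝ => s-u) (-1) u := by
          simpa using (hasDerivAt_id u).const_sub s
        have h3 := ((h1.pow (N+1)).neg).div_const ((N:ℝ)+1)
        convert h3 using 1
        · rfl
        · rfl
        · rfl
        · field_simp
          push_cast
          ring
      have hwint : IntervalIntegrable
          (fun u : ℝ => -(θ-((N:ℝ)+1)) * (1-u) ^ (θ-((N:ℝ)+1)-1)) volume 0 s := by
        apply ContinuousOn.intervalIntegrable
        apply ContinuousOn.mul continuousOn_const
        exact (continuousOn_const.sub continuousOn_id).rpow_const
          (fun u hu => Or.inl (hbase u hu).ne')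
      have hvint : IntervalIntegrable (fun u : ℝ => (s-u)^N) volume 0 s :=
        ((continuousOn_const.sub continuousOn_id).pow N).intervalIntegrable
      have hparts := intervalIntegral.integral_mul_deriv_eq_deriv_mul
        (u := fun u : ℝ => (1-u) ^ (θ-((N:ℝ)+1)))
        (v := fun u : ℝ => -(s-u)^(N+1) / ((N:ℝ)+1))
        (u' := fun u : ℝ => -(θ-((N:ℝ)+1)) * (1-u) ^ (θ-((N:ℝ)+1)-1))
        (v' := fun u : ℝ => (s-u)^N)
        hw hv hwint hvint
    -- now massage hparts
      have hNpos : ((N:ℝ)+1) ≠ 0 := by positivity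
      have e1 : ∫ u in (0:ℝ)..s, (s-u)^N * (1-u) ^ (θ - ((N:ℝ)+1))
          = ∫ u in (0:ℝ)..s, (1-u) ^ (θ-((N:ℝ)+1)) * (s-u)^N :=
        intervalIntegral.integral_congr fun u _ => mul_comm _ _
      have e2 : ∫ u in (0:ℝ)..s,
            (-(θ-((N:ℝ)+1)) * (1-u) ^ (θ-((N:ℝ)+1)-1)) * (-(s-u)^(N+1) / ((N:ℝ)+1))
          = ((θ-((N:ℝ)+1))/((N:ℝ)+1)) *
            ∫ u in (0:ℝ)..s, (s-u)^(N+1) * (1-u) ^ (θ - (((N:ℝ)+1)+1)) := by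
        rw [← intervalIntegral.integral_const_mul]
        refine intervalIntegral.integral_congr fun u _ => ?_
        have : θ-((N:ℝ)+1)-1 = θ - (((N:ℝ)+1)+1) := by ring
        rw [this]
        field_simp
      rw [e1, hparts, e2]
      beta_reduce
      simp only [sub_self, sub_zero, Real.one_rpow, zero_pow (Nat.succ_ne_zero N)]
      field_simp
      ring
    rw [hA]
    rw [Finset.prod_range_succ (n := N+1), Nat.factorial_succ]
    have hNfac : ((N.factorial:ℝ)) ≠ 0 := by positivity
    have hNpos : ((N:ℝ)+1) ≠ 0 := by positivity
    have ecast : ∫ u in (0:ℝ)..s, (s-u)^(N+1) * (1-u) ^ (θ - (((N:ℝ)+1)+1))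
        = ∫ u in (0:ℝ)..s, (s-u)^(N+1) * (1-u) ^ (θ - (((N+1:ℕ):ℝ)+1)) := by
      refine intervalIntegral.integral_congr fun u _ => ?_
      norm_cast
    rw [ecast]
    push_cast
    field_simp
    ring



lemma abs_prod_le_factorial (θ : ℝ) (hθ0 : 0 ≤ θ) (hθ1 : θ ≤ 1) (n : ℕ) :
    |∏ i ∈ Finset.range n, (-θ+(i:ℝ))| ≤ n.factorial := by
  rw [Finset.abs_prod]
  calc ∏ i ∈ Finset.range n, |(-θ+(i:ℝ))| ≤ ∏ i ∈ Finset.range n, ((i:ℝ)+1) := by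
        refine Finset.prod_le_prod (fun i _ => abs_nonneg _) (fun i _ => ?_)
        rw [abs_le]
        constructor <;> push_cast <;> [nlinarith [Nat.cast_nonneg (α := ℝ) i];
          nlinarith [Nat.cast_nonneg (α := ℝ) i]]
    _ = n.factorial := by
        exact_mod_cast congrArg (Nat.cast : ℕ → ℝ) (Finset.prod_range_add_one_eq_factorial n)

lemma hasSum_binom (θ s : ℝ) (hθ0 : 0 ≤ θ) (hθ1 : θ ≤ 1) (hs0 : 0 ≤ s) (hs1 : s < 1) :
    HasSum (fun n : ℕ => (∏ i ∈ Finset.range n, (-θ+(i:ℝ))) / n.factorial * s ^ n)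
      ((1-s) ^ θ) := by
  set b : ℕ → ℝ := fun n => (∏ i ∈ Finset.range n, (-θ+(i:ℝ))) / n.factorial * s ^ n with hb
  have hfac : ∀ n : ℕ, (0:ℝ) < n.factorial := fun n => by positivity
  have hbb : ∀ n, ‖b n‖ ≤ s ^ n := by
    intro n
    rw [hb]
    simp only [norm_mul, norm_div, Real.norm_eq_abs]
    rw [abs_of_nonneg (pow_nonneg hs0 n), abs_of_nonneg (hfac n).le]
    have h1 : |∏ i ∈ Finset.range n, (-θ+(i:ℝ))| / n.factorial ≤ 1 :=
      (div_le_one (hfac n)).mpr (abs_prod_le_factorial θ hθ0 hθ1 n)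
    calc |∏ i ∈ Finset.range n, (-θ+(i:ℝ))| / n.factorial * s ^ n
        ≤ 1 * s ^ n := mul_le_mul_of_nonneg_right h1 (pow_nonneg hs0 n)
      _ = s ^ n := one_mul _
  have hsummable : Summable b :=
    Summable.of_norm_bounded (summable_geometric_of_lt_one hs0 hs1) hbb
  -- remainder tends to zero
  have hrem : Tendsto (fun N : ℕ => (∏ i ∈ Finset.range (N+1), (-θ+(i:ℝ))) / N.factorial
      * ∫ u in (0:ℝ)..s, (s-u)^N * (1-u) ^ (θ - ((N:ℝ)+1))) atTop (nhds 0) := by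
    have hbound : ∀ N : ℕ, |(∏ i ∈ Finset.range (N+1), (-θ+(i:ℝ))) / N.factorial
        * ∫ u in (0:ℝ)..s, (s-u)^N * (1-u) ^ (θ - ((N:ℝ)+1))|
        ≤ ((N:ℝ)+1) * ((1-s) ^ (θ-1) * s ^ N * s) := by
      intro N
      have hs' : 0 < 1 - s := by linarith
      have hIbound : ‖∫ u in (0:ℝ)..s, (s-u)^N * (1-u) ^ (θ - ((N:ℝ)+1))‖
          ≤ s ^ N * (1-s) ^ (θ-1) * |s - 0| := by
        apply intervalIntegral.norm_integral_le_of_norm_le_const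
        intro u hu
        rw [uIoc_of_le hs0] at hu
        obtain ⟨hu0, hus⟩ := hu
        have h1u : 0 < 1 - u := by linarith
        have hkey : (s-u)^N * (1-u) ^ (θ - ((N:ℝ)+1))
            = ((s-u)/(1-u))^N * (1-u) ^ (θ-1) := by
          rw [div_pow]
          rw [show θ - ((N:ℝ)+1) = (θ-1) + (-(N:ℝ)) by ring,
            Real.rpow_add h1u, Real.rpow_neg h1u.le, Real.rpow_natCast]
          field_simp
        rw [Real.norm_eq_abs, hkey, abs_mul]
        have hfrac0 : 0 ≤ (s-u)/(1-u) := div_nonneg (by linarith) h1u.le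
        have hfrac : (s-u)/(1-u) ≤ s := by
          rw [div_le_iff₀ h1u]
          nlinarith
        rw [abs_of_nonneg (pow_nonneg hfrac0 N),
          abs_of_nonneg (Real.rpow_nonneg h1u.le _)]
        have h2 : (1-u) ^ (θ-1) ≤ (1-s) ^ (θ-1) :=
          Real.rpow_le_rpow_of_nonpos hs' (by linarith) (by linarith)
        exact mul_le_mul (pow_le_pow_left₀ hfrac0 hfrac N) h2
          (Real.rpow_nonneg h1u.le _) (pow_nonneg hs0 N)
      rw [abs_mul]
      have hc : |(∏ i ∈ Finset.range (N+1), (-θ+(i:ℝ))) / N.factorial| ≤ (N:ℝ)+1 := by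
        rw [abs_div, abs_of_nonneg (hfac N).le, div_le_iff₀ (hfac N)]
        calc |∏ i ∈ Finset.range (N+1), (-θ+(i:ℝ))| ≤ ((N+1).factorial : ℝ) :=
              abs_prod_le_factorial θ hθ0 hθ1 (N+1)
          _ = ((N:ℝ)+1) * N.factorial := by
              rw [Nat.factorial_succ]; push_cast; ring
      calc |(∏ i ∈ Finset.range (N+1), (-θ+(i:ℝ))) / N.factorial|
            * |∫ u in (0:ℝ)..s, (s-u)^N * (1-u) ^ (θ - ((N:ℝ)+1))|
          ≤ ((N:ℝ)+1) * (s ^ N * (1-s) ^ (θ-1) * |s - 0|) := by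
            have := hIbound
            rw [Real.norm_eq_abs] at this
            exact mul_le_mul hc this (abs_nonneg _) (by positivity)
        _ ≤ ((N:ℝ)+1) * ((1-s) ^ (θ-1) * s ^ N * s) := by
            rw [sub_zero, abs_of_nonneg hs0]
            apply le_of_eq; ring
    have htend : Tendsto (fun N : ℕ => ((N:ℝ)+1) * ((1-s) ^ (θ-1) * s ^ N * s))
        atTop (nhds 0) := by
      have h1 : Tendsto (fun N : ℕ => ((N:ℝ)+1) * s ^ N) atTop (nhds 0) := by
        have h0 := tendsto_pow_const_mul_const_pow_of_lt_one 1 hs0 hs1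
        have hg := tendsto_pow_atTop_nhds_zero_of_lt_one hs0 hs1
        have := h0.add hg
        simp only [pow_one, add_zero] at this
        convert this using 2 with N
        ring
      have h2 := h1.const_mul ((1-s) ^ (θ-1) * s)
      simp only [mul_zero] at h2
      convert h2 using 2 with N
      ring
    refine squeeze_zero_norm (fun N => ?_) htend
    exact hbound N
  -- identify the limit
  have hps := hsummable.hasSum.tendsto_sum_nat.comp (tendsto_add_atTop_nat 1)
  have hps2 : Tendsto (fun N : ℕ => ∑ n ∈ Finset.range (N+1), b n) atTop
      (nhds ((1-s) ^ θ)) := by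
    have : (fun N : ℕ => ∑ n ∈ Finset.range (N+1), b n)
        = fun N : ℕ => (1-s) ^ θ - ((∏ i ∈ Finset.range (N+1), (-θ+(i:ℝ))) / N.factorial
          * ∫ u in (0:ℝ)..s, (s-u)^N * (1-u) ^ (θ - ((N:ℝ)+1))) := by
      funext N
      rw [eq_sub_iff_add_eq, ← binom_remainder θ s hs0 hs1 N]
    rw [this]
    simpa using tendsto_const_nhds.sub hrem
  have : (∑' n, b n) = (1-s) ^ θ := tendsto_nhds_unique hps hps2
  rw [← this]
  exact hsummable.hasSum



lemma Tbound (θ : ℝ) (hθ0 : 0 < θ) (hθ1 : θ < 1) (a : ℝ) (ha : 1 ≤ a) :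
    Real.Gamma (a+1-θ) * Real.Gamma (a+2-θ) / (Real.Gamma (a+2))^2
      ≤ (1/a) ^ ((1:ℝ)+2*θ) := by
  have ha0 : 0 < a := by linarith
  have hA : 0 < Real.Gamma a := Real.Gamma_pos_of_pos ha0
  have hB : 0 < Real.Gamma (a+1) := Real.Gamma_pos_of_pos (by linarith)
  have hC : 0 < Real.Gamma (a+2) := Real.Gamma_pos_of_pos (by linarith)
  have hBe : Real.Gamma (a+1) = a * Real.Gamma a := Real.Gamma_add_one ha0.ne'
  have hCe : Real.Gamma (a+2) = (a+1) * Real.Gamma (a+1) := by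
    rw [show a+2 = (a+1)+1 by ring, Real.Gamma_add_one (by linarith)]
  have h1 : Real.Gamma (a+1-θ) ≤ Real.Gamma a ^ θ * Real.Gamma (a+1) ^ (1-θ) := by
    have := gamma_interp ha0 (by linarith : (0:ℝ) < a+1) hθ0.le hθ1.le
    rwa [show θ*a+(1-θ)*(a+1) = a+1-θ by ring] at this
  have h2 : Real.Gamma (a+2-θ) ≤ Real.Gamma (a+1) ^ θ * Real.Gamma (a+2) ^ (1-θ) := by
    have := gamma_interp (by linarith : (0:ℝ) < a+1) (by linarith : (0:ℝ) < a+2) hθ0.le hθ1.le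
    rwa [show θ*(a+1)+(1-θ)*(a+2) = a+2-θ by ring] at this
  have hGpos1 : 0 < Real.Gamma (a+1-θ) := Real.Gamma_pos_of_pos (by linarith)
  have hstep : Real.Gamma (a+1-θ) * Real.Gamma (a+2-θ) / (Real.Gamma (a+2))^2
      ≤ (Real.Gamma a ^ θ * Real.Gamma (a+1) ^ (1-θ))
        * (Real.Gamma (a+1) ^ θ * Real.Gamma (a+2) ^ (1-θ)) / (Real.Gamma (a+2))^2 := by
    gcongr
    exact (Real.Gamma_pos_of_pos (by linarith)).le
  refine hstep.trans ?_
  have key : (Real.Gamma a ^ θ * Real.Gamma (a+1) ^ (1-θ))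
        * (Real.Gamma (a+1) ^ θ * Real.Gamma (a+2) ^ (1-θ)) / (Real.Gamma (a+2))^2
      = a ^ (-θ) * (a+1) ^ (-((1:ℝ)+θ)) := by
    have e1 : Real.Gamma (a+1) ^ (1-θ) * Real.Gamma (a+1) ^ θ = Real.Gamma (a+1) := by
      rw [← Real.rpow_add hB]; norm_num
    have e2 : Real.Gamma (a+2) ^ (1-θ) * Real.Gamma (a+2) ^ ((1:ℝ)+θ)
        = (Real.Gamma (a+2))^2 := by
      rw [← Real.rpow_add hC, show (1-θ)+((1:ℝ)+θ) = ((2:ℕ):ℝ) by push_cast; ring,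
        Real.rpow_natCast]
    have e3 : Real.Gamma (a+2) ^ ((1:ℝ)+θ)
        = (a+1) ^ ((1:ℝ)+θ) * (Real.Gamma (a+1) * Real.Gamma (a+1) ^ θ) := by
      rw [hCe, Real.mul_rpow (by linarith) hB.le, Real.rpow_add hB, Real.rpow_one]
    have e4 : Real.Gamma (a+1) ^ θ = a ^ θ * Real.Gamma a ^ θ := by
      rw [hBe, Real.mul_rpow ha0.le hA.le]
    have hane : a ^ θ ≠ 0 := (Real.rpow_pos_of_pos ha0 θ).ne'
    have hane2 : (a+1) ^ ((1:ℝ)+θ) ≠ 0 := (Real.rpow_pos_of_pos (by linarith) _).ne'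
    have hGane : Real.Gamma a ^ θ ≠ 0 := (Real.rpow_pos_of_pos hA θ).ne'
    have hCne : Real.Gamma (a+2) ^ ((1:ℝ)+θ) ≠ 0 := (Real.rpow_pos_of_pos hC _).ne'
    calc (Real.Gamma a ^ θ * Real.Gamma (a+1) ^ (1-θ))
          * (Real.Gamma (a+1) ^ θ * Real.Gamma (a+2) ^ (1-θ)) / (Real.Gamma (a+2))^2
        = Real.Gamma a ^ θ * (Real.Gamma (a+1) ^ (1-θ) * Real.Gamma (a+1) ^ θ)
            * Real.Gamma (a+2) ^ (1-θ) / (Real.Gamma (a+2))^2 := by ring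
      _ = Real.Gamma a ^ θ * Real.Gamma (a+1)
            * Real.Gamma (a+2) ^ (1-θ) / (Real.Gamma (a+2) ^ (1-θ) * Real.Gamma (a+2) ^ ((1:ℝ)+θ)) := by
          rw [e1, e2]
      _ = Real.Gamma a ^ θ * Real.Gamma (a+1) / Real.Gamma (a+2) ^ ((1:ℝ)+θ) := by
          rw [div_eq_div_iff (by positivity) (by positivity)]
          ring
      _ = Real.Gamma a ^ θ * Real.Gamma (a+1)
            / ((a+1) ^ ((1:ℝ)+θ) * (Real.Gamma (a+1) * (a ^ θ * Real.Gamma a ^ θ))) := by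
          rw [e3, e4]
      _ = 1 / ((a+1) ^ ((1:ℝ)+θ) * a ^ θ) := by
          field_simp
      _ = a ^ (-θ) * (a+1) ^ (-((1:ℝ)+θ)) := by
          rw [Real.rpow_neg ha0.le, Real.rpow_neg (by linarith : (0:ℝ) ≤ a+1), one_div, mul_inv]
          ring
  rw [key]
  have h3 : (a+1) ^ (-((1:ℝ)+θ)) ≤ a ^ (-((1:ℝ)+θ)) :=
    Real.rpow_le_rpow_of_nonpos ha0 (by linarith) (by linarith)
  calc a ^ (-θ) * (a+1) ^ (-((1:ℝ)+θ)) ≤ a ^ (-θ) * a ^ (-((1:ℝ)+θ)) := by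
        apply mul_le_mul_of_nonneg_left h3 (Real.rpow_nonneg ha0.le _)
    _ = a ^ (-((1:ℝ)+2*θ)) := by rw [← Real.rpow_add ha0]; ring_nf
    _ = (1/a) ^ ((1:ℝ)+2*θ) := by
        rw [one_div, Real.inv_rpow ha0.le, ← Real.rpow_neg_one, ← Real.rpow_mul ha0.le]
        ring_nf








lemma setbeta {u v : ℝ} (hu : 0 < u) (hv : 0 < v) :
    ∫ x in Ioc (0:ℝ) 1, x ^ (u-1) * (1-x) ^ (v-1)
      = Real.Gamma u * Real.Gamma v / Real.Gamma (u+v) := by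
  rw [← intervalIntegral.integral_of_le zero_le_one]
  exact beta_real hu hv

lemma setbeta_integrable {u v : ℝ} (hu : 0 < u) (hv : 0 < v) :
    IntegrableOn (fun x : ℝ => x ^ (u-1) * (1-x) ^ (v-1)) (Ioc (0:ℝ) 1) volume := by
  have := beta_integrable hu hv
  rwa [intervalIntegrable_iff_integrableOn_Ioc_of_le zero_le_one] at this

lemma hasSum_main (θ : ℝ) (hθ0 : 0 < θ) (hθ1 : θ < 1) :
    HasSum (fun n : ℕ => (∏ i ∈ Finset.range n, (1-θ+(i:ℝ)))
        * (∏ i ∈ Finset.range n, (-θ+(i:ℝ))) / ((n.factorial:ℝ))^2)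
      (Real.Gamma (2*θ) / (Real.Gamma θ * Real.Gamma (θ+1))) := by
  set F : ℕ → ℝ → ℝ := fun n t =>
    (∏ i ∈ Finset.range n, (-θ+(i:ℝ))) / n.factorial * (t ^ ((n:ℝ)-θ) * (1-t) ^ (θ-1))
    with hF
  have hfac : ∀ n : ℕ, (0:ℝ) < n.factorial := fun n => by positivity
  have hGpos : ∀ {a : ℝ}, 0 < a → 0 < Real.Gamma a := fun h => Real.Gamma_pos_of_pos h
  -- each F n matches a beta integrand up to constant
  have hFeq : ∀ n : ℕ, ∀ t : ℝ,
      F n t = (∏ i ∈ Finset.range n, (-θ+(i:ℝ))) / n.factorial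
        * (t ^ (((n:ℝ)+1-θ)-1) * (1-t) ^ (θ-1)) := by
    intro n t
    rw [hF, show ((n:ℝ)+1-θ)-1 = (n:ℝ)-θ from by ring]
  have hupos : ∀ n : ℕ, (0:ℝ) < (n:ℝ)+1-θ := fun n => by
    have : (0:ℝ) ≤ n := Nat.cast_nonneg n
    linarith
  -- integrability
  have hFint : ∀ n : ℕ, IntegrableOn (F n) (Ioc (0:ℝ) 1) volume := by
    intro n
    have h2 : IntegrableOn (fun t : ℝ => (∏ i ∈ Finset.range n, (-θ+(i:ℝ))) / n.factorial
        * (t ^ (((n:ℝ)+1-θ)-1) * (1-t) ^ (θ-1))) (Ioc (0:ℝ) 1) volume :=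
      (setbeta_integrable (hupos n) hθ0).const_mul _
    exact h2.congr_fun (fun t _ => (hFeq n t).symm) measurableSet_Ioc
  -- value of each integral
  have hFval : ∀ n : ℕ, ∫ t in Ioc (0:ℝ) 1, F n t
      = (∏ i ∈ Finset.range n, (-θ+(i:ℝ))) / n.factorial
        * (Real.Gamma ((n:ℝ)+1-θ) * Real.Gamma θ / (n.factorial:ℝ)) := by
    intro n
    rw [setIntegral_congr_fun measurableSet_Ioc (fun t _ => hFeq n t),
      MeasureTheory.integral_const_mul, setbeta (hupos n) hθ0]
    have : (n:ℝ)+1-θ+θ = (n:ℝ)+1 := by ring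
    rw [this, show ((n:ℝ)+1) = ((n:ℕ):ℝ)+1 by norm_num, Real.Gamma_nat_eq_factorial]
  -- norm integrals
  have hFnormval : ∀ n : ℕ, ∫ t in Ioc (0:ℝ) 1, ‖F n t‖
      = |∏ i ∈ Finset.range n, (-θ+(i:ℝ))| / n.factorial
        * (Real.Gamma ((n:ℝ)+1-θ) * Real.Gamma θ / (n.factorial:ℝ)) := by
    intro n
    have heq : ∀ t ∈ Ioc (0:ℝ) 1, ‖F n t‖
        = |∏ i ∈ Finset.range n, (-θ+(i:ℝ))| / n.factorial
          * (t ^ (((n:ℝ)+1-θ)-1) * (1-t) ^ (θ-1)) := by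
      intro t ht
      have h1 : 0 ≤ t ^ (((n:ℝ)+1-θ)-1) * (1-t) ^ (θ-1) :=
        mul_nonneg (Real.rpow_nonneg ht.1.le _) (Real.rpow_nonneg (by linarith [ht.2]) _)
      rw [hFeq n t, Real.norm_eq_abs, abs_mul, abs_div, abs_of_nonneg (hfac n).le,
        abs_of_nonneg h1]
    rw [setIntegral_congr_fun measurableSet_Ioc heq, MeasureTheory.integral_const_mul,
      setbeta (hupos n) hθ0]
    have : (n:ℝ)+1-θ+θ = (n:ℝ)+1 := by ring
    rw [this, show ((n:ℝ)+1) = ((n:ℕ):ℝ)+1 by norm_num, Real.Gamma_nat_eq_factorial]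
  -- coefficient via Gamma
  have hprodshift : ∀ n : ℕ, (∏ i ∈ Finset.range (n+1), (-θ+(i:ℝ)))
      = (∏ i ∈ Finset.range n, (1-θ+(i:ℝ))) * (-θ) := by
    intro n
    rw [Finset.prod_range_succ' (fun i => -θ+(i:ℝ)) n]
    congr 1
    · refine Finset.prod_congr rfl fun i _ => ?_
      push_cast; ring
    · norm_num
  have hprodpos : ∀ n : ℕ, 0 ≤ ∏ i ∈ Finset.range n, (1-θ+(i:ℝ)) := by
    intro n
    refine Finset.prod_nonneg fun i _ => ?_
    have : (0:ℝ) ≤ i := Nat.cast_nonneg i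
    linarith
  have hgam : ∀ n : ℕ, Real.Gamma ((n:ℝ)+1-θ)
      = (∏ i ∈ Finset.range n, (1-θ+(i:ℝ))) * Real.Gamma (1-θ) := by
    intro n
    have := gamma_prod (1-θ) (by linarith) n
    rwa [show (1:ℝ)-θ+(n:ℝ) = (n:ℝ)+1-θ by ring] at this
  -- summability of norm integrals
  have hsummable : Summable (fun n : ℕ => ∫ t in Ioc (0:ℝ) 1, ‖F n t‖) := by
    apply (summable_nat_add_iff 2).mp
    have hle : ∀ k : ℕ, ∫ t in Ioc (0:ℝ) 1, ‖F (k+2) t‖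
        ≤ (θ * Real.Gamma θ / Real.Gamma (1-θ)) * (1/((k:ℝ)+1)) ^ ((1:ℝ)+2*θ) := by
      intro k
      rw [hFnormval (k+2)]
      have hcoef : |∏ i ∈ Finset.range (k+2), (-θ+(i:ℝ))|
          = θ * ∏ i ∈ Finset.range (k+1), (1-θ+(i:ℝ)) := by
        rw [hprodshift (k+1), abs_mul, abs_of_nonneg (hprodpos (k+1)), abs_neg,
          abs_of_nonneg hθ0.le]
        ring
      rw [hcoef]
      have hgam1 := hgam (k+1)
      have hGm : 0 < Real.Gamma (1-θ) := Real.Gamma_pos_of_pos (by linarith)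
      have hprodval : (∏ i ∈ Finset.range (k+1), (1-θ+(i:ℝ)))
          = Real.Gamma (((k:ℝ)+1)+1-θ) / Real.Gamma (1-θ) := by
        rw [show ((k:ℝ)+1)+1-θ = ((k+1:ℕ):ℝ)+1-θ by push_cast; ring, hgam (k+1)]
        field_simp
      rw [hprodval]
      have hfac2 : ((k+2).factorial : ℝ) = Real.Gamma (((k:ℝ)+1)+2) := by
        rw [show ((k:ℝ)+1)+2 = ((k+2:ℕ):ℝ)+1 by push_cast; ring,
          Real.Gamma_nat_eq_factorial]
      have hexp : ((k+2:ℕ):ℝ)+1-θ = ((k:ℝ)+1)+2-θ := by push_cast; ring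
      rw [hexp, hfac2]
      have hTb := Tbound θ hθ0 hθ1 ((k:ℝ)+1) (by linarith [Nat.cast_nonneg (α := ℝ) k])
      set a := (k:ℝ)+1
      have hGa : 0 < Real.Gamma (a+1-θ) := Real.Gamma_pos_of_pos (by
        simp only [a]; push_cast; nlinarith [Nat.cast_nonneg (α := ℝ) k])
      have hGa2 : 0 < Real.Gamma (a+2-θ) := Real.Gamma_pos_of_pos (by
        simp only [a]; push_cast; nlinarith [Nat.cast_nonneg (α := ℝ) k])
      have hGa3 : 0 < Real.Gamma (a+2) := Real.Gamma_pos_of_pos (by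
        simp only [a]; push_cast; nlinarith [Nat.cast_nonneg (α := ℝ) k])
      have lhs_eq : θ * (Real.Gamma (a+1-θ) / Real.Gamma (1-θ)) / (Real.Gamma (a+2))
            * (Real.Gamma (a+2-θ) * Real.Gamma θ / (Real.Gamma (a+2)))
          = (θ * Real.Gamma θ / Real.Gamma (1-θ))
            * (Real.Gamma (a+1-θ) * Real.Gamma (a+2-θ) / (Real.Gamma (a+2))^2) := by
        field_simp
      rw [lhs_eq]
      have hK : 0 ≤ θ * Real.Gamma θ / Real.Gamma (1-θ) := by positivity
      exact mul_le_mul_of_nonneg_left hTb hK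
    have hsum2 : Summable (fun k : ℕ =>
        (θ * Real.Gamma θ / Real.Gamma (1-θ)) * (1/((k:ℝ)+1)) ^ ((1:ℝ)+2*θ)) := by
      apply Summable.mul_left
      have hbase : Summable (fun n : ℕ => 1/(n:ℝ) ^ ((1:ℝ)+2*θ)) :=
        Real.summable_one_div_nat_rpow.mpr (by linarith)
      have := (summable_nat_add_iff 1).mpr hbase
      refine this.congr fun k => ?_
      push_cast
      rw [one_div ((k:ℝ)+1), Real.inv_rpow (show (0:ℝ) ≤ (k:ℝ)+1 by positivity), one_div]
    refine Summable.of_nonneg_of_le (fun k => ?_) hle hsum2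
    exact MeasureTheory.integral_nonneg fun t => norm_nonneg _
  -- main hasSum of integrals
  have hmain := MeasureTheory.hasSum_integral_of_summable_integral_norm
    (μ := volume.restrict (Ioc (0:ℝ) 1)) (F := F) hFint hsummable
  -- evaluate the integral of the tsum
  have htsumval : ∫ t in Ioc (0:ℝ) 1, (∑' n, F n t)
      = Real.Gamma (1-θ) * Real.Gamma (2*θ) / Real.Gamma (θ+1) := by
    rw [MeasureTheory.integral_Ioc_eq_integral_Ioo]
    have heq : ∀ t ∈ Ioo (0:ℝ) 1, (∑' n, F n t)
        = t ^ ((1-θ)-1) * (1-t) ^ (2*θ-1) := by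
      intro t ht
      have hhs := hasSum_binom θ t hθ0.le hθ1.le ht.1.le ht.2
      have h3 : HasSum (fun n => F n t)
          ((1-t) ^ θ * (t ^ (-θ) * (1-t) ^ (θ-1))) := by
        have h4 := hhs.mul_right (t ^ (-θ) * (1-t) ^ (θ-1))
        refine h4.congr_fun fun n => ?_
        rw [hF]
        simp only
        rw [show ((n:ℝ)-θ) = ((n:ℝ))+(-θ) by ring, Real.rpow_add ht.1,
          Real.rpow_natCast]
        ring
      rw [h3.tsum_eq]
      have h1t : 0 < 1 - t := by linarith [ht.2]
      rw [show (2*θ-1) = θ+(θ-1) by ring, Real.rpow_add h1t,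
        show (1-θ)-1 = -θ by ring]
      ring
    rw [MeasureTheory.setIntegral_congr_fun measurableSet_Ioo heq,
      ← MeasureTheory.integral_Ioc_eq_integral_Ioo, setbeta (by linarith) (by linarith)]
    rw [show (1-θ)+2*θ = θ+1 by ring]
  rw [htsumval] at hmain
  -- rewrite each integral
  have hFval2 : ∀ n : ℕ, (∫ t in Ioc (0:ℝ) 1, F n t)
      = ((∏ i ∈ Finset.range n, (1-θ+(i:ℝ))) * (∏ i ∈ Finset.range n, (-θ+(i:ℝ)))
          / ((n.factorial:ℝ))^2) * (Real.Gamma (1-θ) * Real.Gamma θ) := by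
    intro n
    rw [hFval n, hgam n]
    field_simp
  have hmain2 : HasSum (fun n : ℕ =>
      ((∏ i ∈ Finset.range n, (1-θ+(i:ℝ))) * (∏ i ∈ Finset.range n, (-θ+(i:ℝ)))
        / ((n.factorial:ℝ))^2) * (Real.Gamma (1-θ) * Real.Gamma θ))
      (Real.Gamma (1-θ) * Real.Gamma (2*θ) / Real.Gamma (θ+1)) := by
    refine hmain.congr_fun fun n => (hFval2 n).symm ▸ rfl
  have hKpos : 0 < Real.Gamma (1-θ) * Real.Gamma θ :=
    mul_pos (Real.Gamma_pos_of_pos (by linarith)) (Real.Gamma_pos_of_pos hθ0)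
  have hfinal := hmain2.div_const (Real.Gamma (1-θ) * Real.Gamma θ)
  have hval : Real.Gamma (1-θ) * Real.Gamma (2*θ) / Real.Gamma (θ+1)
      / (Real.Gamma (1-θ) * Real.Gamma θ)
      = Real.Gamma (2*θ) / (Real.Gamma θ * Real.Gamma (θ+1)) := by
    have h1 : Real.Gamma (1-θ) ≠ 0 := (Real.Gamma_pos_of_pos (by linarith)).ne'
    have h2 : Real.Gamma θ ≠ 0 := (Real.Gamma_pos_of_pos hθ0).ne'
    have h3 : Real.Gamma (θ+1) ≠ 0 := (Real.Gamma_pos_of_pos (by linarith)).ne'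
    field_simp
  rw [hval] at hfinal
  refine hfinal.congr_fun fun n => ?_
  have h2 : Real.Gamma (1-θ) * Real.Gamma θ ≠ 0 := hKpos.ne'
  field_simp
  rw [mul_div_assoc, div_self (left_ne_zero_of_mul h2), mul_one]


/-- The hypergeometric series `₂F₁(1−θ,−θ;1;x) = ∑_{n≥0} (1−θ)_n(−θ)_n/(n!)² · xⁿ`. -/
def gaussF (θ x : ℝ) : ℝ :=
  ∑' n : ℕ, (∏ i ∈ Finset.range n, (1 - θ + i)) * (∏ i ∈ Finset.range n, (-θ + i)) /
      ((n.factorial : ℝ)) ^ 2 * x ^ n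

/-- For `0 < θ ≤ 1`: `₂F₁(1−θ,−θ;1;x) ≥ Γ(2θ+1)/(2Γ(θ+1)²)` for `0 ≤ x < 1`, and the
series converges at `x = 1` with value `Γ(2θ+1)/(2Γ(θ+1)²)`. -/
theorem statement7 (θ : ℝ) (hθ0 : 0 < θ) (hθ1 : θ ≤ 1) :
    (∀ x : ℝ, 0 ≤ x → x < 1 →
      Real.Gamma (2 * θ + 1) / (2 * Real.Gamma (θ + 1) ^ 2) ≤ gaussF θ x)
    ∧ HasSum
      (fun n : ℕ => (∏ i ∈ Finset.range n, (1 - θ + i)) *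
        (∏ i ∈ Finset.range n, (-θ + i)) / ((n.factorial : ℝ)) ^ 2 * 1 ^ n)
      (Real.Gamma (2 * θ + 1) / (2 * Real.Gamma (θ + 1) ^ 2)) := by
  set c : ℕ → ℝ := fun n => (∏ i ∈ Finset.range n, (1 - θ + (i:ℝ))) *
      (∏ i ∈ Finset.range n, (-θ + (i:ℝ))) / ((n.factorial : ℝ)) ^ 2 with hc
  set L : ℝ := Real.Gamma (2 * θ + 1) / (2 * Real.Gamma (θ + 1) ^ 2) with hL
  have hs' : HasSum c L := by
    rcases lt_or_eq_of_le hθ1 with hlt | heq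
    · have hmain := hasSum_main θ hθ0 hlt
      have hval : L = Real.Gamma (2*θ) / (Real.Gamma θ * Real.Gamma (θ+1)) := by
        rw [hL]
        have e1 : Real.Gamma (2*θ+1) = 2*θ * Real.Gamma (2*θ) :=
          Real.Gamma_add_one (by positivity)
        have e2 : Real.Gamma (θ+1) = θ * Real.Gamma θ :=
          Real.Gamma_add_one hθ0.ne'
        have h2 : Real.Gamma θ ≠ 0 := (Real.Gamma_pos_of_pos hθ0).ne'
        have h3 : Real.Gamma (2*θ) ≠ 0 := (Real.Gamma_pos_of_pos (by positivity)).ne'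
        rw [e1, pow_two, e2]
        field_simp
      rw [hval]
      exact hmain
    · subst heq
      have hc0 : ∀ n : ℕ, 1 ≤ n → c n = 0 := by
        intro n hn
        rw [hc]
        simp only
        rw [Finset.prod_eq_zero (Finset.mem_range.mpr (by omega : 0 < n))
          (by norm_num : (1:ℝ) - 1 + ((0:ℕ):ℝ) = 0)]
        ring
      have hone : L = c 0 := by
        rw [hL, hc]
        simp only [Finset.range_zero, Finset.prod_empty, Nat.factorial_zero]
        rw [show (2:ℝ)*1+1 = ((2:ℕ):ℝ)+1 by norm_num, Real.Gamma_nat_eq_factorial,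
          show (1:ℝ)+1 = ((1:ℕ):ℝ)+1 by norm_num, Real.Gamma_nat_eq_factorial]
        norm_num
      rw [hone]
      exact hasSum_single 0 (fun n hn => hc0 n (by omega))
  have hcsign : ∀ n : ℕ, 1 ≤ n → c n ≤ 0 := by
    intro n hn
    rw [hc]
    simp only
    have h1 : 0 ≤ ∏ i ∈ Finset.range n, (1 - θ + (i:ℝ)) := by
      refine Finset.prod_nonneg fun i _ => ?_
      have : (0:ℝ) ≤ i := Nat.cast_nonneg i
      linarith
    have h2 : ∏ i ∈ Finset.range n, (-θ + (i:ℝ)) ≤ 0 := by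
      obtain ⟨m, rfl⟩ : ∃ m, n = m + 1 := ⟨n - 1, by omega⟩
      rw [Finset.prod_range_succ' (fun i => -θ + (i:ℝ)) m]
      apply mul_nonpos_of_nonneg_of_nonpos
      · refine Finset.prod_nonneg fun i _ => ?_
        have : (0:ℝ) ≤ i := Nat.cast_nonneg i
        push_cast
        linarith
      · push_cast
        linarith
    have hfac : (0:ℝ) < ((n.factorial:ℝ))^2 := by positivity
    exact div_nonpos_of_nonpos_of_nonneg (mul_nonpos_of_nonneg_of_nonpos h1 h2) hfac.le
  constructor
  · intro x hx0 hx1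
    have habs : Summable (fun n => |c n|) := by
      have h1 : Summable (fun n : ℕ => -(c (n+1))) :=
        ((summable_nat_add_iff 1).mpr hs'.summable).neg
      have h2 : Summable (fun n : ℕ => |c (n+1)|) :=
        h1.congr fun n => (abs_of_nonpos (hcsign (n+1) (by omega))).symm
      exact (summable_nat_add_iff 1).mp h2
    have hsummx : Summable (fun n => c n * x^n) := by
      refine Summable.of_norm_bounded habs fun n => ?_
      rw [Real.norm_eq_abs, abs_mul]
      refine mul_le_of_le_one_right (abs_nonneg _) ?_
      rw [abs_pow]
      exact pow_le_one₀ (abs_nonneg x) (by rw [abs_of_nonneg hx0]; linarith)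
    have hterm : ∀ n : ℕ, c n ≤ c n * x^n := by
      intro n
      rcases Nat.eq_zero_or_pos n with h | h
      · subst h; simp
      · have h1 : x^n ≤ 1 := pow_le_one₀ hx0 hx1.le
        have := mul_le_mul_of_nonpos_left h1 (hcsign n h)
        simpa using this
    calc L = ∑' n, c n := hs'.tsum_eq.symm
      _ ≤ ∑' n, c n * x^n := Summable.tsum_le_tsum hterm hs'.summable hsummx
      _ = gaussF θ x := rfl
  · refine hs'.congr_fun fun n => ?_
    rw [one_pow, mul_one]
end
end

section
/- Let α, β be real with −1 < α < ∞ and −1 < β < ∞, and let n, N be integers with 0 ≤ n ≤ N. Then ∑_{k=n}^{N} ((−1)^{N−k}/((k−n)!·(N−k)!)) · (β+n+2)_{k−n}·(β+k+2)_{N−k} / ( (α+2β+2n+4)_{k−n}·(α+2β+N+k+3)_{N−k} ) = δ_{n,N}, where δ_{n,N} is the Kronecker delta (equal to 1 if n=N and 0 otherwise). -/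
noncomputable section

/-- The Pochhammer symbol `(a)_m = a(a+1)⋯(a+m−1)` for real `a`. -/
def pochR (a : ℝ) (m : ℕ) : ℝ := ∏ i ∈ Finset.range m, (a + i)

lemma pochR_add (a : ℝ) (p q : ℕ) : pochR a (p + q) = pochR a p * pochR (a + p) q := by
  unfold pochR
  rw [Finset.prod_range_add]
  congr 1
  refine Finset.prod_congr rfl fun i _ => ?_
  push_cast; ring

lemma pochR_pos (a : ℝ) (ha : 0 < a) (m : ℕ) : 0 < pochR a m := by
  refine Finset.prod_pos fun i _ => ?_
  have : (0:ℝ) ≤ i := Nat.cast_nonneg i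
  linarith

open Polynomial in
lemma fwdDiff_iter_poly_eval (m : ℕ) (p : ℝ[X]) (hp : p.degree < m) (y : ℕ) :
    (fwdDiff 1)^[m] (fun j : ℕ => p.eval (j : ℝ)) y = 0 := by
  induction m generalizing p y with
  | zero =>
    have : p = 0 := by
      rw [← Polynomial.degree_eq_bot]
      simpa using hp
    simp [this]
  | succ m ih =>
    rw [Function.iterate_succ_apply]
    have hΔ : fwdDiff (1 : ℕ) (fun j : ℕ => p.eval (j : ℝ))
        = fun j : ℕ => (p.comp (X + C 1) - p).eval (j : ℝ) := by
      funext j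
      simp [fwdDiff, Polynomial.eval_comp]
    rw [hΔ]
    refine ih _ ?_ _
    by_cases hp0 : p = 0
    · simp [hp0]
    · have hnd : (X + C (1:ℝ)).natDegree ≠ 0 := by
        rw [Polynomial.natDegree_X_add_C]; norm_num
      have hlc : (p.comp (X + C 1)).leadingCoeff = p.leadingCoeff := by
        rw [Polynomial.leadingCoeff_comp hnd, Polynomial.leadingCoeff_X_add_C, one_pow, mul_one]
      have hcomp_ne : p.comp (X + C 1) ≠ 0 := by
        intro h
        apply hp0
        have := Polynomial.leadingCoeff_ne_zero.mpr hp0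
        rw [← hlc, h] at this
        simp at this
      have hdc : (p.comp (X + C 1)).degree = p.degree := by
        rw [Polynomial.degree_eq_natDegree hcomp_ne, Polynomial.degree_eq_natDegree hp0,
          Polynomial.natDegree_comp, Polynomial.natDegree_X_add_C, mul_one]
      have hlt : (p.comp (X + C 1) - p).degree < p.degree := by
        have := Polynomial.degree_sub_lt hdc hcomp_ne hlc
        rwa [hdc] at this
      have hle : p.degree ≤ (m : ℕ∞) := by
        rw [Polynomial.degree_eq_natDegree hp0] at hp ⊢
        have h' : p.natDegree < m + 1 := by exact_mod_cast hp
        exact WithBot.coe_le_coe.mpr (Nat.lt_succ_iff.mp h')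
      exact lt_of_lt_of_le hlt hle

open Polynomial in
lemma alt_sum_poly (m : ℕ) (p : ℝ[X]) (hp : p.degree < m) :
    ∑ j ∈ Finset.range (m + 1), ((-1 : ℝ) ^ (m - j) * (m.choose j)) * p.eval (j : ℝ) = 0 := by
  calc ∑ j ∈ Finset.range (m + 1), ((-1 : ℝ) ^ (m - j) * (m.choose j)) * p.eval (j : ℝ)
      = (fwdDiff 1)^[m] (fun j : ℕ => p.eval (j : ℝ)) 0 := by
        rw [fwdDiff_iter_eq_sum_shift (h := (1 : ℕ)) (fun j : ℕ => p.eval (j : ℝ)) m 0]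
        refine Finset.sum_congr rfl fun j _ => ?_
        simp [zsmul_eq_mul]
    _ = 0 := fwdDiff_iter_poly_eval m p hp 0

/-- The combinatorial identity behind Proposition 3.8:
`∑_{k=n}^{N} ((−1)^{N−k}/((k−n)!(N−k)!)) (β+n+2)_{k−n}(β+k+2)_{N−k} /
  ((α+2β+2n+4)_{k−n}(α+2β+N+k+3)_{N−k}) = δ_{n,N}`. -/
theorem statement11 (α β : ℝ) (hα : -1 < α) (hβ : -1 < β)
    (n N : ℕ) (hnN : n ≤ N) :
    ∑ k ∈ Finset.Icc n N,
        ((-1 : ℝ) ^ (N - k) / ((k - n).factorial * (N - k).factorial)) *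
          (pochR (β + n + 2) (k - n) * pochR (β + k + 2) (N - k)) /
          (pochR (α + 2 * β + 2 * n + 4) (k - n) *
            pochR (α + 2 * β + N + k + 3) (N - k))
      = if n = N then 1 else 0 := by
  obtain ⟨m, rfl⟩ : ∃ m, N = n + m := ⟨N - n, by omega⟩
  -- reindex
  rw [← Finset.Ico_add_one_right_eq_Icc, Finset.sum_Ico_eq_sum_range]
  have hrange : n + m + 1 - n = m + 1 := by omega
  rw [hrange]
  set b : ℝ := β + n + 2 with hb
  set c : ℝ := α + 2 * β + 2 * n + 4 with hc
  have hcpos : (0:ℝ) < c := by rw [hc]; have : (0:ℝ) ≤ n := Nat.cast_nonneg n; linarith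
  rcases Nat.eq_zero_or_pos m with hm0 | hmpos
  · -- m = 0 : single term equals 1
    subst hm0
    simp [pochR]
  · -- m ≥ 1 : sum is zero
    obtain ⟨s, rfl⟩ : ∃ s, m = s + 1 := ⟨m - 1, by omega⟩
    have hne : ¬ n = n + (s + 1) := by omega
    rw [if_neg hne]
    -- rewrite each term
    have hterm : ∀ j ∈ Finset.range (s + 1 + 1),
        ((-1 : ℝ) ^ ((n + (s + 1)) - (n + j)) /
            (((n + j) - n).factorial * ((n + (s + 1)) - (n + j)).factorial)) *
          (pochR b ((n + j) - n) * pochR (β + (n + j : ℕ) + 2) ((n + (s + 1)) - (n + j))) /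
          (pochR c ((n + j) - n) *
            pochR (α + 2 * β + (n + (s + 1) : ℕ) + (n + j : ℕ) + 3) ((n + (s + 1)) - (n + j)))
        = (pochR b (s + 1) / ((s + 1).factorial * pochR c (2 * (s + 1) - 1))) *
            (((-1 : ℝ) ^ (s + 1 - j) * ((s + 1).choose j)) * pochR (c + j) s) := by
      intro j hj
      have hjle : j ≤ s + 1 := by simpa [Nat.lt_succ_iff] using hj
      have h1 : (n + j) - n = j := by omega
      have h2 : (n + (s + 1)) - (n + j) = s + 1 - j := by omega
      have hcast1 : (β + ((n + j : ℕ) : ℝ) + 2) = b + j := by rw [hb]; push_cast; ring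
      have hcast2 : (α + 2 * β + ((n + (s + 1) : ℕ) : ℝ) + ((n + j : ℕ) : ℝ) + 3)
          = c + j + s := by
        rw [hc]; push_cast; ring
      rw [h1, h2, hcast1, hcast2]
      -- numerator collapse
      have hnum : pochR b j * pochR (b + j) (s + 1 - j) = pochR b (s + 1) := by
        rw [← pochR_add]; congr 1; omega
      -- denominator identity
      have hden : pochR c j * pochR (c + j) s * pochR (c + j + s) (s + 1 - j)
          = pochR c (2 * (s + 1) - 1) := by
        have e1 : pochR (c + j) s * pochR ((c + j) + (s:ℕ)) (s + 1 - j)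
            = pochR (c + j) (s + (s + 1 - j)) := (pochR_add _ _ _).symm
        have e2 : pochR c j * pochR (c + j) (s + (s + 1 - j))
            = pochR c (j + (s + (s + 1 - j))) := (pochR_add _ _ _).symm
        have e3 : j + (s + (s + 1 - j)) = 2 * (s + 1) - 1 := by omega
        calc pochR c j * pochR (c + j) s * pochR (c + j + s) (s + 1 - j)
            = pochR c j * (pochR (c + j) s * pochR ((c + j) + (s:ℕ)) (s + 1 - j)) := by ring
          _ = pochR c j * pochR (c + j) (s + (s + 1 - j)) := by rw [e1]
          _ = pochR c (2 * (s + 1) - 1) := by rw [e2, e3]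
      -- factorial identity
      have hfact : ((s + 1).factorial : ℝ)
          = ((s + 1).choose j) * (j.factorial) * ((s + 1 - j).factorial) := by
        exact_mod_cast (Nat.choose_mul_factorial_mul_factorial hjle).symm
      -- nonzeroness
      have hjnn : (0:ℝ) ≤ j := Nat.cast_nonneg j
      have hsnn : (0:ℝ) ≤ s := Nat.cast_nonneg s
      have hc1 : pochR c j ≠ 0 := (pochR_pos c hcpos j).ne'
      have hc2 : pochR (c + j) s ≠ 0 := (pochR_pos _ (by linarith) s).ne'
      have hc3 : pochR (c + j + s) (s + 1 - j) ≠ 0 := (pochR_pos _ (by linarith) _).ne'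
      have hc4 : pochR c (2 * (s + 1) - 1) ≠ 0 := (pochR_pos c hcpos _).ne'
      have hf1 : (j.factorial : ℝ) ≠ 0 := by exact_mod_cast j.factorial_ne_zero
      have hf2 : ((s + 1 - j).factorial : ℝ) ≠ 0 := by exact_mod_cast (s + 1 - j).factorial_ne_zero
      have hf3 : ((s + 1).factorial : ℝ) ≠ 0 := by exact_mod_cast (s + 1).factorial_ne_zero
      rw [← hnum]
      field_simp
      rw [hfact]
      linear_combination
        ((-1:ℝ) * pochR b j * pochR (b + j) (s + 1 - j) * ((s+1).choose j)
          * (j.factorial) * ((s + 1 - j).factorial)) * hden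
    rw [Finset.sum_congr rfl hterm, ← Finset.mul_sum]
    -- the remaining alternating sum vanishes
    have hpoly : ∑ j ∈ Finset.range (s + 1 + 1),
        ((-1 : ℝ) ^ (s + 1 - j) * ((s + 1).choose j)) * pochR (c + j) s = 0 := by
      have hp : (∏ i ∈ Finset.range s, (Polynomial.X + Polynomial.C (c + i)) : Polynomial ℝ).degree
          < ((s + 1 : ℕ) : WithBot ℕ) := by
        apply lt_of_le_of_lt (Polynomial.degree_prod_le _ _)
        calc ∑ i ∈ Finset.range s, (Polynomial.X + Polynomial.C (c + (i:ℝ))).degree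
            ≤ ∑ _i ∈ Finset.range s, (1 : WithBot ℕ) := by
              refine Finset.sum_le_sum fun i _ => ?_
              exact le_of_eq (Polynomial.degree_X_add_C _)
          _ = (s : WithBot ℕ) := by simp
          _ < ((s + 1 : ℕ) : WithBot ℕ) := by exact_mod_cast Nat.lt_succ_self s
      have halt := alt_sum_poly (s + 1) _ hp
      rw [← halt]
      refine Finset.sum_congr rfl fun j _ => ?_
      congr 1
      rw [Polynomial.eval_prod]
      unfold pochR
      refine Finset.prod_congr rfl fun i _ => ?_
      simp
      ring
    rw [hpoly, mul_zero]
end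
end
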